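/- For the diagonal-orbit system, if the classical pointwise ergodic theorem held in the form 'for every bounded measurable F, (1/N)∑_{n=1}^N F(φⁿ z) → ∫ F dμ^{⊗k} for ν-a.e. z', then applying it to F = 1_A with A = ⋃_{n∈ℤ} φⁿΔ yields a contradiction, since the averages are identically 1 ν-a.e. while μ^{⊗k}(A) = 0. -/

import Mathlib

open MeasureTheory Filter Topology
open scoped ENNReal NNReal

/-! The set `A = ⋃ₙ φⁿ Δ` is `φ`-invariant and contains the diagonal, so the measure `ν`, a
weighted sum of push-forwards of `μ_Δ` by powers of `φ`, is carried by `A`. Along the forward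
orbit of any point of `A` the averages of `1_A` are identically `1`, whereas the claimed limit is
`μ^{⊗k}(A) = 0`, `A` being a countable union of null sets. Since `ν ≠ 0`, this is absurd. -/

/-- The product transformation `φ = T₁ × ⋯ × T_k` on `X^k`. -/
noncomputable def phi {X : Type*} (k : ℕ) (T : Fin k → Equiv.Perm X) :
    Equiv.Perm (Fin k → X) :=
  Equiv.piCongrRight T

/-- The diagonal measure `μ_Δ`, the pushforward of `μ` under `x ↦ (x,…,x)`. -/
noncomputable def muDelta {X : Type*} [MeasurableSpace X] (μ : Measure X) (k : ℕ) :
    Measure (Fin k → X) :=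
  Measure.map (fun x _ => x) μ

/-- The diagonal-orbit measure `ν(A) = (1/3) ∑_{n∈ℤ} 2^{-|n|} μ_Δ(φⁿ A)`.
Note `μ_Δ(φⁿ A) = (φ^{-n})_* μ_Δ (A)`. -/
noncomputable def nu {X : Type*} [MeasurableSpace X] (μ : Measure X) (k : ℕ)
    (T : Fin k → Equiv.Perm X) : Measure (Fin k → X) :=
  (3 : ℝ≥0∞)⁻¹ • Measure.sum (fun n : ℤ =>
    (2 : ℝ≥0∞)⁻¹ ^ n.natAbs • Measure.map (⇑(phi k T ^ (-n))) (muDelta μ k))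

namespace Equiv.Perm

variable {α : Type*}

def saturation (f : Perm α) (s : Set α) : Set α := ⋃ n : ℤ, ⇑(f ^ n) '' s

theorem subset_saturation (f : Perm α) (s : Set α) : s ⊆ f.saturation s :=
  fun z hz => Set.mem_iUnion.2 ⟨0, by simpa using hz⟩

theorem preimage_zpow_saturation (f : Perm α) (s : Set α) (g : ℤ) :
    ⇑(f ^ g) ⁻¹' f.saturation s = f.saturation s := by
  ext z
  simp only [saturation, Set.mem_preimage, Set.mem_iUnion, Set.mem_image]
  constructor
  · rintro ⟨m, w, hw, hwz⟩
    refine ⟨m - g, w, hw, (f ^ g).injective ?_⟩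
    rw [← Perm.mul_apply, ← zpow_add, add_sub_cancel, hwz]
  · rintro ⟨m, w, hw, rfl⟩
    exact ⟨g + m, w, hw, by rw [zpow_add, Perm.mul_apply]⟩

theorem mapsTo_pow_saturation (f : Perm α) (s : Set α) (n : ℕ) :
    Set.MapsTo ⇑(f ^ n) (f.saturation s) (f.saturation s) := fun z hz => by
  rw [← zpow_natCast, ← Set.mem_preimage, preimage_zpow_saturation]
  exact hz

end Equiv.Perm

namespace MeasureTheory.Measure

variable {α β : Type*} [MeasurableSpace α] [MeasurableSpace β]

theorem map_apply_eq_zero_of_preimage_null {μ : Measure α} {f : α → β} {s : Set β}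
    (hs : MeasurableSet s) (h : μ (f ⁻¹' s) = 0) : μ.map f s = 0 := by
  by_cases hf : AEMeasurable f μ
  · rwa [map_apply_of_aemeasurable hf hs]
  · simp [map_of_not_aemeasurable hf]

end MeasureTheory.Measure

theorem tendsto_inv_mul_sum_Icc_of_eq_const {u : ℕ → ℝ} {c : ℝ} (h : ∀ n, 1 ≤ n → u n = c) :
    Tendsto (fun N : ℕ => (N : ℝ)⁻¹ * ∑ n ∈ Finset.Icc 1 N, u n) atTop (𝓝 c) := by
  refine tendsto_const_nhds.congr' ?_
  filter_upwards [eventually_ge_atTop 1] with N hN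
  have hN' : (N : ℝ) ≠ 0 := by positivity
  rw [Finset.sum_congr rfl fun n hn => h n (Finset.mem_Icc.1 hn).1]
  simp [hN']

section DiagonalOrbit

variable {X : Type*} [MeasurableSpace X] (μ : Measure X) (k : ℕ)

theorem muDelta_compl_eq_zero {s : Set (Fin k → X)} (hs : MeasurableSet s)
    (h : Set.range (fun x : X => fun _ : Fin k => x) ⊆ s) : muDelta μ k sᶜ = 0 := by
  rw [muDelta, Measure.map_apply (by fun_prop) hs.compl, Set.preimage_compl,
    Set.preimage_eq_univ_iff.2 h, Set.compl_univ, measure_empty]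

theorem muDelta_ne_zero [NeZero μ] : muDelta μ k ≠ 0 :=
  (Measure.map_ne_zero_iff (by fun_prop)).2 (NeZero.ne μ)

variable (T : Fin k → Equiv.Perm X)

theorem nu_ne_zero [NeZero μ] : nu μ k T ≠ 0 := by
  rw [nu, Ne, Measure.ennreal_smul_eq_zero, not_or]
  refine ⟨by simp, fun h => muDelta_ne_zero μ k ?_⟩
  simpa using Measure.sum_eq_zero.1 h 0

theorem nu_apply_eq_zero {s : Set (Fin k → X)} (hs : MeasurableSet s)
    (hinv : ∀ n : ℤ, ⇑(phi k T ^ n) ⁻¹' s = s) (h : muDelta μ k s = 0) : nu μ k T s = 0 := by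
  simp only [nu, Measure.smul_apply, Measure.sum_apply _ hs,
    Measure.map_apply_eq_zero_of_preimage_null hs ((hinv _).symm ▸ h), smul_zero, tsum_zero]

theorem ae_nu_mem_of_invariant {s : Set (Fin k → X)} (hs : MeasurableSet s)
    (hinv : ∀ n : ℤ, ⇑(phi k T ^ n) ⁻¹' s = s)
    (hdiag : Set.range (fun x : X => fun _ : Fin k => x) ⊆ s) : ∀ᵐ z ∂nu μ k T, z ∈ s :=
  mem_ae_iff.2 <| nu_apply_eq_zero μ k T (s := sᶜ) hs.compl
    (fun n => by rw [Set.preimage_compl, hinv]) (muDelta_compl_eq_zero μ k hs hdiag)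

end DiagonalOrbit

theorem pointwise_ergodic_theorem_fails_general {X : Type*} [MeasurableSpace X] (μ : Measure X) [IsProbabilityMeasure μ]
    (k : ℕ) (T : Fin k → Equiv.Perm X)
    (Δ : Set (Fin k → X)) (hΔ : Δ = Set.range (fun x : X => fun _ : Fin k => x))
    (hΔmeas : ∀ n : ℤ, MeasurableSet (⇑(phi k T ^ n) '' Δ))
    (hprod : ∀ n : ℤ, (Measure.pi fun _ : Fin k => μ) (⇑(phi k T ^ n) '' Δ) = 0)
    (hPET : ∀ F : (Fin k → X) → ℝ, Measurable F → (∃ C : ℝ, ∀ z, |F z| ≤ C) →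
        ∀ᵐ z ∂(nu μ k T),
          Tendsto (fun N : ℕ => (N : ℝ)⁻¹ * ∑ n ∈ Finset.Icc 1 N, F ((phi k T ^ n) z))
            atTop (𝓝 (∫ z, F z ∂(Measure.pi fun _ : Fin k => μ)))) :
    False := by
  set A := (phi k T).saturation Δ
  have hA : MeasurableSet A := .iUnion hΔmeas
  have hA_null : (Measure.pi fun _ : Fin k => μ) A = 0 := measure_iUnion_null hprod
  have hA_ae : ∀ᵐ z ∂nu μ k T, z ∈ A := ae_nu_mem_of_invariant μ k T hA
    ((phi k T).preimage_zpow_saturation Δ) (hΔ ▸ (phi k T).subset_saturation Δ)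
  have hAvg := hPET (A.indicator 1) (measurable_const.indicator hA)
    ⟨1, fun z => by by_cases hz : z ∈ A <;> simp [hz]⟩
  rw [integral_indicator_one hA, measureReal_def, hA_null, ENNReal.toReal_zero] at hAvg
  have hfalse : ∀ᵐ _ ∂nu μ k T, False := by
    filter_upwards [hAvg, hA_ae] with z hz hzA
    refine one_ne_zero (tendsto_nhds_unique (tendsto_inv_mul_sum_Icc_of_eq_const fun n _ => ?_) hz)
    exact Set.indicator_of_mem ((phi k T).mapsTo_pow_saturation Δ n hzA) 1
  exact nu_ne_zero μ k T (ae_eq_bot.1 (eventually_false_iff_eq_bot.1 hfalse))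

theorem pointwise_ergodic_theorem_fails {X : Type*} [MeasurableSpace X] (μ : Measure X) [IsProbabilityMeasure μ]
    (k : ℕ) (T : Fin k → Equiv.Perm X)
    (hTmeas : ∀ i, Measurable (T i)) (hTmeas' : ∀ i, Measurable (T i).symm)
    (hTpres : ∀ i, MeasurePreserving (T i) μ μ)
    (hcomm : ∀ i j, ((T i : X → X) ∘ (T j : X → X)) = ((T j : X → X) ∘ (T i : X → X)))
    (Δ : Set (Fin k → X)) (hΔ : Δ = Set.range (fun x : X => fun _ : Fin k => x))
    (hΔmeas : ∀ n : ℤ, MeasurableSet (⇑(phi k T ^ n) '' Δ))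
    (hprod : ∀ n : ℤ, (Measure.pi fun _ : Fin k => μ) (⇑(phi k T ^ n) '' Δ) = 0)
    (hPET : ∀ F : (Fin k → X) → ℝ, Measurable F → (∃ C : ℝ, ∀ z, |F z| ≤ C) →
        ∀ᵐ z ∂(nu μ k T),
          Tendsto (fun N : ℕ => (N : ℝ)⁻¹ * ∑ n ∈ Finset.Icc 1 N, F ((phi k T ^ n) z))
            atTop (𝓝 (∫ z, F z ∂(Measure.pi fun _ : Fin k => μ)))) :
    False :=
  pointwise_ergodic_theorem_fails_general μ k T Δ hΔ hΔmeas hprod hPET
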